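/- Let C(t) = C₀(E + α t AᵀΓ⁻¹A C₀)⁻¹ and define L(t) := (C(t)C₀⁻¹)^{−1/α} = S E(t)^{−1/α} S⁻¹ (using the diagonalization C₀AᵀΓ⁻¹A = S D S⁻¹ and E(t) = diag((1+αtμ_i)⁻¹)). If x(t) solves ẋ(t) = −C(t)AᵀΓ⁻¹(Ax(t) − y) with x(0) = x₀, then d/dt [L(t)x(t)] = (C(t)C₀⁻¹)^{1−1/α} C₀AᵀΓ⁻¹y, and consequently x(t) = (C(t)C₀⁻¹)^{1/α} x₀ + (C(t)C₀⁻¹)^{1/α} ∫₀ᵗ (C(s)C₀⁻¹)^{1−1/α} ds · C₀AᵀΓ⁻¹ y. -/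

import Mathlib

/-!
Since `C(t) = C₀ (1 + αt AᵀΓ⁻¹A C₀)⁻¹ = (1 + αt C₀AᵀΓ⁻¹A)⁻¹ C₀` (push-through identity), the
matrix `C(t)C₀⁻¹` is diagonalized by the same `S` as `C₀AᵀΓ⁻¹A`, with eigenvalues
`(1 + αtμᵢ)⁻¹`. All its powers are therefore `S`-conjugates of diagonal matrices and can be
differentiated entrywise: `d/dt (1 + αtD)^(1/α) = (1 + αtD)^(1/α - 1) D`. In `d/dt [L(t)x(t)]`
this term cancels the `x`-dependent part of `L(t)ẋ(t)`, leaving the forcing term; the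
fundamental theorem of calculus and `L(t)⁻¹ = (C(t)C₀⁻¹)^(1/α)` give the formula for `x(t)`.
-/

open Matrix

/-- Spectral power `(C(t)C₀⁻¹)^(-p) = S diag((1+αtμᵢ)^p) S⁻¹`, defined via the
shared diagonalization `C₀AᵀΓ⁻¹A = S diag(μ) S⁻¹`. -/
noncomputable def specPow {n : ℕ} (S : Matrix (Fin n) (Fin n) ℝ) (μ : Fin n → ℝ)
    (α p t : ℝ) : Matrix (Fin n) (Fin n) ℝ :=
  S * Matrix.diagonal (fun i => (1 + α * t * μ i) ^ (p : ℝ)) * S⁻¹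

namespace Matrix

variable {ι R : Type*} [Fintype ι] [DecidableEq ι]

-- No invertibility is needed: by `det_one_add_mul_comm`, either both inverses are genuine or
-- both are the junk value `0`.
theorem mul_inv_one_add_mul_swap {m : Type*} [Fintype m] [DecidableEq m] [CommRing R]
    (X : Matrix m ι R) (Y : Matrix ι m R) :
    X * (1 + Y * X)⁻¹ = (1 + X * Y)⁻¹ * X := by
  by_cases hXY : IsUnit (1 + X * Y).det
  · have hYX : IsUnit (1 + Y * X).det := by rwa [det_one_add_mul_comm]
    have hcomm : (1 + X * Y) * X = X * (1 + Y * X) := by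
      rw [Matrix.add_mul, Matrix.mul_add, Matrix.one_mul, Matrix.mul_one, Matrix.mul_assoc]
    calc X * (1 + Y * X)⁻¹ = (1 + X * Y)⁻¹ * ((1 + X * Y) * X) * (1 + Y * X)⁻¹ := by
          rw [nonsing_inv_mul_cancel_left _ _ hXY]
      _ = (1 + X * Y)⁻¹ * X := by
          rw [hcomm, ← Matrix.mul_assoc, mul_nonsing_inv_cancel_right _ _ hYX]
  · have hYX : ¬IsUnit (1 + Y * X).det := by rwa [det_one_add_mul_comm]
    rw [nonsing_inv_apply_not_isUnit _ hXY, nonsing_inv_apply_not_isUnit _ hYX,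
      Matrix.mul_zero, Matrix.zero_mul]

section Conj

variable {S : Matrix ι ι R}

theorem conj_diagonal_mul_conj_diagonal [CommRing R] (hS : IsUnit S.det) (f g : ι → R) :
    S * diagonal f * S⁻¹ * (S * diagonal g * S⁻¹) = S * diagonal (f * g) * S⁻¹ := by
  simp only [Matrix.mul_assoc, nonsing_inv_mul_cancel_left _ _ hS]
  rw [← Matrix.mul_assoc (diagonal f), diagonal_mul_diagonal']
  rfl

theorem conj_diagonal_one [CommRing R] (hS : IsUnit S.det) : S * diagonal 1 * S⁻¹ = 1 := by
  rw [diagonal_one', Matrix.mul_one, mul_nonsing_inv _ hS]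

theorem one_add_smul_conj_diagonal [CommRing R] (hS : IsUnit S.det) (c : R) (f : ι → R) :
    1 + c • (S * diagonal f * S⁻¹) = S * diagonal (1 + c • f) * S⁻¹ := by
  have hdiag : diagonal (1 + c • f) = 1 + c • diagonal f := by
    rw [← diagonal_one', ← diagonal_smul, diagonal_add]
    rfl
  rw [hdiag, Matrix.mul_add, Matrix.add_mul,
    Matrix.mul_one, mul_nonsing_inv _ hS, Matrix.mul_smul, Matrix.smul_mul]

theorem inv_conj_diagonal [Field R] (hS : IsUnit S.det) {f : ι → R} (hf : ∀ i, f i ≠ 0) :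
    (S * diagonal f * S⁻¹)⁻¹ = S * diagonal f⁻¹ * S⁻¹ := by
  refine inv_eq_right_inv ?_
  have hff : f * f⁻¹ = 1 := funext fun i => mul_inv_cancel₀ (hf i)
  rw [conj_diagonal_mul_conj_diagonal hS, hff, conj_diagonal_one hS]

end Conj

end Matrix

section Calculus

variable {𝕜 : Type*} [NontriviallyNormedField 𝕜] {m ι : Type*} [Fintype m] [Fintype ι]
  {v : 𝕜 → ι → 𝕜} {v' : ι → 𝕜} {t : 𝕜}

theorem HasDerivAt.const_mulVec [CompleteSpace 𝕜] (M : Matrix m ι 𝕜) (hv : HasDerivAt v v' t) :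
    HasDerivAt (fun s => M *ᵥ v s) (M *ᵥ v') t :=
  (Matrix.mulVecLin M).toContinuousLinearMap.hasFDerivAt.comp_hasDerivAt t hv

theorem HasDerivAt.diagonal_mulVec [DecidableEq ι] {d : 𝕜 → ι → 𝕜} {d' : ι → 𝕜}
    (hd : HasDerivAt d d' t) (hv : HasDerivAt v v' t) :
    HasDerivAt (fun s => diagonal (d s) *ᵥ v s) (diagonal d' *ᵥ v t + diagonal (d t) *ᵥ v') t := by
  have hmul : ∀ e w : ι → 𝕜, diagonal e *ᵥ w = e * w := fun e w => funext (mulVec_diagonal e w)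
  simp only [hmul]
  exact hd.mul hv

end Calculus

theorem hasDerivAt_pi_one_add_mul_mul_rpow {ι : Type*} [Fintype ι] {a t : ℝ} {c : ι → ℝ} (p : ℝ)
    (h : ∀ i, 0 < 1 + a * t * c i) :
    HasDerivAt (fun s i => (1 + a * s * c i) ^ p)
      (fun i => p * (1 + a * t * c i) ^ (p - 1) * (a * c i)) t := by
  refine hasDerivAt_pi.2 fun i => ?_
  have hlin : HasDerivAt (fun s => 1 + a * s * c i) (a * c i) t := by
    simpa using (((hasDerivAt_id t).const_mul a).mul_const (c i)).const_add 1
  exact (Real.hasDerivAt_rpow_const (Or.inl (h i).ne')).comp t hlin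

theorem Matrix.of_intervalIntegral_mulVec_eq_sub {m ι : Type*} [Fintype ι] {P : ℝ → Matrix m ι ℝ}
    {f : ℝ → m → ℝ} {w : ι → ℝ} {a b : ℝ} (hab : a ≤ b)
    (hf : ∀ s ∈ Set.Icc a b, HasDerivAt f (P s *ᵥ w) s) (hP : ContinuousOn P (Set.Icc a b)) :
    Matrix.of (fun i j => ∫ s in a..b, P s i j) *ᵥ w = f b - f a := by
  ext i
  rw [← Set.uIcc_of_le hab] at hf hP
  have hPij : ∀ j, IntervalIntegrable (fun s => P s i j) MeasureTheory.volume a b := fun j =>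
    (continuousOn_pi.1 (continuousOn_pi.1 hP i) j).intervalIntegrable
  have hPw : IntervalIntegrable (fun s => (P s *ᵥ w) i) MeasureTheory.volume a b := by
    simpa only [mulVec, dotProduct, Finset.sum_fn] using
      IntervalIntegrable.sum Finset.univ fun j _ => (hPij j).mul_const (w j)
  rw [Pi.sub_apply, ← intervalIntegral.integral_eq_sub_of_hasDerivAt
    (fun s hs => hasDerivAt_pi.1 (hf s hs) i) hPw]
  simp only [mulVec, dotProduct, of_apply]
  rw [intervalIntegral.integral_finsetSum fun j _ => (hPij j).mul_const (w j)]
  simp only [intervalIntegral.integral_mul_const]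

section SpecPow

variable {n : ℕ} {S : Matrix (Fin n) (Fin n) ℝ} {μ : Fin n → ℝ} {α t : ℝ}

theorem specPow_mul_specPow (hS : IsUnit S.det) (ht : ∀ i, 0 < 1 + α * t * μ i) (p q : ℝ) :
    specPow S μ α p t * specPow S μ α q t = specPow S μ α (p + q) t := by
  rw [specPow, specPow, conj_diagonal_mul_conj_diagonal hS, specPow]
  exact congrArg (fun f => S * diagonal f * S⁻¹) (funext fun i => (Real.rpow_add (ht i) p q).symm)

theorem specPow_neg_mul_specPow (hS : IsUnit S.det) (ht : ∀ i, 0 < 1 + α * t * μ i) (p : ℝ) :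
    specPow S μ α (-p) t * specPow S μ α p t = 1 := by
  rw [specPow_mul_specPow hS ht, neg_add_cancel, specPow]
  simp_rw [Real.rpow_zero]
  exact conj_diagonal_one hS

theorem specPow_at_zero (hS : IsUnit S.det) (p : ℝ) : specPow S μ α p 0 = 1 := by
  rw [specPow]
  simp_rw [mul_zero, zero_mul, add_zero, Real.one_rpow]
  exact conj_diagonal_one hS

theorem specPow_neg_one (hS : IsUnit S.det) (ht : ∀ i, 0 < 1 + α * t * μ i) :
    specPow S μ α (-1) t = (1 + (α * t) • (S * diagonal μ * S⁻¹))⁻¹ := by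
  rw [one_add_smul_conj_diagonal hS, inv_conj_diagonal hS (fun i => ?_), specPow]
  · refine congrArg (fun f => S * diagonal f * S⁻¹) (funext fun i => ?_)
    simp [Real.rpow_neg_one, mul_assoc]
  · simpa [mul_assoc] using (ht i).ne'

theorem continuousAt_specPow (ht : ∀ i, 0 < 1 + α * t * μ i) (p : ℝ) :
    ContinuousAt (specPow S μ α p) t :=
  ((continuous_const.matrix_mul continuous_id.matrix_diagonal).matrix_mul
    continuous_const).continuousAt.comp (hasDerivAt_pi_one_add_mul_mul_rpow p ht).continuousAt

theorem hasDerivAt_specPow_mulVec (hS : IsUnit S.det) (ht : ∀ i, 0 < 1 + α * t * μ i) (p : ℝ)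
    {x : ℝ → Fin n → ℝ} {x' : Fin n → ℝ} (hx : HasDerivAt x x' t) :
    HasDerivAt (fun s => specPow S μ α p s *ᵥ x s)
      (((p * α) • (specPow S μ α (p - 1) t * (S * diagonal μ * S⁻¹))) *ᵥ x t +
        specPow S μ α p t *ᵥ x') t := by
  have h := ((hasDerivAt_pi_one_add_mul_mul_rpow p ht).diagonal_mulVec
    (hx.const_mulVec S⁻¹)).const_mulVec S
  convert h using 1
  · funext s
    simp only [specPow, mulVec_mulVec, Matrix.mul_assoc]
  · rw [specPow, specPow, conj_diagonal_mul_conj_diagonal hS, ← smul_mul_assoc,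
      ← mul_smul_comm, ← diagonal_smul]
    simp only [mulVec_add, mulVec_mulVec, Matrix.mul_assoc]
    congr 5
    funext i
    simp only [Pi.smul_apply, Pi.mul_apply, smul_eq_mul]
    ring

theorem mul_inv_one_add_smul_mul_eq_specPow (hS : IsUnit S.det) (ht : ∀ i, 0 < 1 + α * t * μ i)
    {C₀ B : Matrix (Fin n) (Fin n) ℝ} (h : C₀ * B = S * diagonal μ * S⁻¹) :
    C₀ * (1 + (α * t) • (B * C₀))⁻¹ = specPow S μ α (-1) t * C₀ := by
  rw [← smul_mul_assoc, mul_inv_one_add_mul_swap, mul_smul_comm, h, specPow_neg_one hS ht]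

theorem hasDerivAt_specPow_one_div_mulVec (hS : IsUnit S.det) (hα : α ≠ 0)
    (ht : ∀ i, 0 < 1 + α * t * μ i) {x : ℝ → Fin n → ℝ} {b : Fin n → ℝ}
    (hx : HasDerivAt x (-(specPow S μ α (-1) t *ᵥ ((S * diagonal μ * S⁻¹) *ᵥ x t - b))) t) :
    HasDerivAt (fun s => specPow S μ α (1 / α) s *ᵥ x s) (specPow S μ α (1 / α - 1) t *ᵥ b) t := by
  convert hasDerivAt_specPow_mulVec hS ht (1 / α) hx using 1
  rw [one_div_mul_cancel hα, one_smul, mulVec_neg, mulVec_mulVec _ (specPow S μ α (1 / α) t),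
    specPow_mul_specPow hS ht, ← sub_eq_add_neg (1 / α), mulVec_sub, mulVec_mulVec,
    ← sub_eq_add_neg, sub_sub_cancel]

end SpecPow

theorem variation_of_constants_general {n m k : ℕ} (α : ℝ) (hα : 1 ≤ α)
    (C₀ : Matrix (Fin n) (Fin n) ℝ)
    (A : Matrix (Fin m) (Fin n) ℝ)
    (Γ : Matrix (Fin m) (Fin m) ℝ)
    (y : Fin m → ℝ)
    (S : Matrix (Fin n) (Fin n) ℝ) (μ : Fin n → ℝ)
    (hS : IsUnit S.det)
    (hμpos : ∀ i : Fin n, (i : ℕ) < k → 0 < μ i)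
    (hμzero : ∀ i : Fin n, k ≤ (i : ℕ) → μ i = 0)
    (hdiag : C₀ * Aᵀ * Γ⁻¹ * A = S * Matrix.diagonal μ * S⁻¹)
    (C : ℝ → Matrix (Fin n) (Fin n) ℝ)
    (hC : ∀ t : ℝ, C t = C₀ * (1 + (α * t) • (Aᵀ * Γ⁻¹ * A * C₀))⁻¹)
    (x₀ : Fin n → ℝ) (x : ℝ → Fin n → ℝ) (hx0 : x 0 = x₀)
    (hx : ∀ t : ℝ, 0 ≤ t → ∀ i : Fin n,
      HasDerivAt (fun s => x s i)
        (-((C t * Aᵀ * Γ⁻¹) *ᵥ (A *ᵥ x t - y)) i) t) :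
    (∀ t : ℝ, 0 ≤ t → ∀ i : Fin n,
      HasDerivAt (fun s => (specPow S μ α (1 / α) s *ᵥ x s) i)
        (((specPow S μ α (1 / α - 1) t * C₀ * Aᵀ * Γ⁻¹) *ᵥ y) i) t) ∧
    (∀ t : ℝ, 0 ≤ t →
      x t = specPow S μ α (-(1 / α)) t *ᵥ x₀ +
        (specPow S μ α (-(1 / α)) t *
          Matrix.of (fun i j => ∫ s in (0:ℝ)..t, specPow S μ α (1 / α - 1) s i j) *
          C₀ * Aᵀ * Γ⁻¹) *ᵥ y) := by
  have hα₀ : 0 < α := one_pos.trans_le hα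
  have hpos : ∀ t, 0 ≤ t → ∀ i, 0 < 1 + α * t * μ i := fun t ht i => by
    have hμ : 0 ≤ μ i :=
      (lt_or_ge (i : ℕ) k).elim (fun h => (hμpos i h).le) fun h => (hμzero i h).ge
    positivity
  set w := (C₀ * Aᵀ * Γ⁻¹) *ᵥ y
  have hw : ∀ M : Matrix (Fin n) (Fin n) ℝ, (M * C₀ * Aᵀ * Γ⁻¹) *ᵥ y = M *ᵥ w := fun M => by
    simp only [w, mulVec_mulVec, Matrix.mul_assoc]
  have hderiv : ∀ t, 0 ≤ t → HasDerivAt (fun s => specPow S μ α (1 / α) s *ᵥ x s)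
      (specPow S μ α (1 / α - 1) t *ᵥ w) t := fun t ht => by
    refine hasDerivAt_specPow_one_div_mulVec hS hα₀.ne' (hpos t ht)
      ((hasDerivAt_pi.2 (hx t ht)).congr_deriv ?_)
    have hCt : C t = specPow S μ α (-1) t * C₀ := by
      rw [hC, mul_inv_one_add_smul_mul_eq_specPow hS (hpos t ht)]
      simpa only [Matrix.mul_assoc] using hdiag
    rw [hCt, ← hdiag]
    simp only [w, ← mulVec_mulVec, mulVec_sub]
    rfl
  refine ⟨fun t ht i => ?_, fun t ht => ?_⟩
  · rw [hw]
    exact hasDerivAt_pi.1 (hderiv t ht) i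
  · have hFTC := Matrix.of_intervalIntegral_mulVec_eq_sub ht (fun s hs => hderiv s hs.1)
      (continuousOn_of_forall_continuousAt fun s hs => continuousAt_specPow (hpos s hs.1) _)
    rw [specPow_at_zero hS, one_mulVec, hx0] at hFTC
    calc x t = (specPow S μ α (-(1 / α)) t * specPow S μ α (1 / α) t) *ᵥ x t := by
          rw [specPow_neg_mul_specPow hS (hpos t ht), one_mulVec]
      _ = specPow S μ α (-(1 / α)) t *ᵥ
            (x₀ + Matrix.of (fun i j => ∫ s in (0:ℝ)..t, specPow S μ α (1 / α - 1) s i j) *ᵥ w) := by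
          rw [← mulVec_mulVec, hFTC, add_sub_cancel]
      _ = _ := by
          rw [mulVec_add, hw, mulVec_mulVec]

theorem variation_of_constants {n m k : ℕ} (hk : k ≤ n) (α : ℝ) (hα : 1 ≤ α)
    (C₀ : Matrix (Fin n) (Fin n) ℝ) (hC₀ : C₀.PosDef)
    (A : Matrix (Fin m) (Fin n) ℝ)
    (Γ : Matrix (Fin m) (Fin m) ℝ) (hΓ : Γ.PosDef)
    (y : Fin m → ℝ)
    (S : Matrix (Fin n) (Fin n) ℝ) (μ : Fin n → ℝ)
    (hS : IsUnit S.det)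
    (hμpos : ∀ i : Fin n, (i : ℕ) < k → 0 < μ i)
    (hμzero : ∀ i : Fin n, k ≤ (i : ℕ) → μ i = 0)
    (hdiag : C₀ * Aᵀ * Γ⁻¹ * A = S * Matrix.diagonal μ * S⁻¹)
    (C : ℝ → Matrix (Fin n) (Fin n) ℝ)
    (hC : ∀ t : ℝ, C t = C₀ * (1 + (α * t) • (Aᵀ * Γ⁻¹ * A * C₀))⁻¹)
    (x₀ : Fin n → ℝ) (x : ℝ → Fin n → ℝ) (hx0 : x 0 = x₀)
    (hx : ∀ t : ℝ, 0 ≤ t → ∀ i : Fin n,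
      HasDerivAt (fun s => x s i)
        (-((C t * Aᵀ * Γ⁻¹) *ᵥ (A *ᵥ x t - y)) i) t) :
    (∀ t : ℝ, 0 ≤ t → ∀ i : Fin n,
      HasDerivAt (fun s => (specPow S μ α (1 / α) s *ᵥ x s) i)
        (((specPow S μ α (1 / α - 1) t * C₀ * Aᵀ * Γ⁻¹) *ᵥ y) i) t) ∧
    (∀ t : ℝ, 0 ≤ t →
      x t = specPow S μ α (-(1 / α)) t *ᵥ x₀ +
        (specPow S μ α (-(1 / α)) t *
          Matrix.of (fun i j => ∫ s in (0:ℝ)..t, specPow S μ α (1 / α - 1) s i j) *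
          C₀ * Aᵀ * Γ⁻¹) *ᵥ y) :=
  variation_of_constants_general α hα C₀ A Γ y S μ hS hμpos hμzero hdiag C hC x₀ x hx0 hx
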